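/- Under the bijective correspondence between complete extensions and complete labellings, a complete labelling maximizes the set of in-labelled arguments if and only if the corresponding extension is a preferred extension. -/

import Mathlib

variable {α : Type*}

inductive Label | IN | OUT | UNDEC
deriving DecidableEq

def conflictFree (att : α → α → Prop) (T : Set α) : Prop :=
  ∀ a ∈ T, ∀ b ∈ T, ¬ att a b

def acceptable (att : α → α → Prop) (T : Set α) (a : α) : Prop :=
  ∀ b, att b a → ∃ c ∈ T, att c b

def admissible (att : α → α → Prop) (T : Set α) : Prop :=
  conflictFree att T ∧ ∀ a ∈ T, acceptable att T a

def complete (att : α → α → Prop) (T : Set α) : Prop :=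
  admissible att T ∧ ∀ a, acceptable att T a → a ∈ T

def preferred (att : α → α → Prop) (T : Set α) : Prop :=
  complete att T ∧ ∀ U, complete att U → T ⊆ U → U = T

def completeLab (att : α → α → Prop) (Lab : α → Label) : Prop :=
  (∀ a, Lab a = Label.IN ↔ ∀ b, att b a → Lab b = Label.OUT) ∧
  (∀ a, Lab a = Label.OUT ↔ ∃ b, att b a ∧ Lab b = Label.IN)

/-! The in-sets of complete labellings are exactly the complete extensions: a complete labelling's
in-set is complete, and a complete extension `T` is the in-set of the labelling with in `T`, out
the arguments attacked by `T`, undec the rest. So both maximality conditions range over the same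
family of sets. -/

theorem completeLab.complete_setOf_eq_in {att : α → α → Prop} {Lab : α → Label}
    (h : completeLab att Lab) : complete att {a | Lab a = Label.IN} := by
  obtain ⟨hin, hout⟩ := h
  refine ⟨⟨?conflictFree, ?defended⟩, ?complete⟩
  case conflictFree =>
    intro a ha b hb hab
    have hb_out : Lab b = Label.OUT := (hout b).2 ⟨a, hab, ha⟩
    exact absurd (hb.symm.trans hb_out) (by decide)
  case defended =>
    intro a ha b hba
    obtain ⟨c, hcb, hc⟩ := (hout b).1 ((hin a).1 ha b hba)
    exact ⟨c, hc, hcb⟩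
  case complete =>
    intro a ha
    refine (hin a).2 fun b hba => ?_
    obtain ⟨c, hc, hcb⟩ := ha b hba
    exact (hout b).2 ⟨c, hcb, hc⟩

open Classical in
noncomputable def labelling (att : α → α → Prop) (T : Set α) (a : α) : Label :=
  if a ∈ T then Label.IN else if ∃ b ∈ T, att b a then Label.OUT else Label.UNDEC

theorem labelling_eq_in {att : α → α → Prop} {T : Set α} {a : α} :
    labelling att T a = Label.IN ↔ a ∈ T := by
  unfold labelling
  split_ifs <;> simpa

theorem labelling_eq_out {att : α → α → Prop} {T : Set α} {a : α} :
    labelling att T a = Label.OUT ↔ a ∉ T ∧ ∃ b ∈ T, att b a := by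
  unfold labelling
  split_ifs <;> simp_all

theorem setOf_labelling_eq_in (att : α → α → Prop) (T : Set α) :
    {a | labelling att T a = Label.IN} = T :=
  Set.ext fun _ => labelling_eq_in

theorem complete.completeLab_labelling {att : α → α → Prop} {T : Set α}
    (hT : complete att T) : completeLab att (labelling att T) := by
  obtain ⟨⟨hcf, hdef⟩, hcomp⟩ := hT
  have not_mem_of_att {a b : α} (hb : b ∈ T) (hba : att b a) : a ∉ T :=
    fun ha => hcf b hb a ha hba
  refine ⟨fun a => ?_, fun a => ?_⟩
  · simp only [labelling_eq_in, labelling_eq_out]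
    refine ⟨fun ha b hba => ?_, fun hatt => hcomp a fun b hba => (hatt b hba).2⟩
    obtain ⟨c, hc, hcb⟩ := hdef a ha b hba
    exact ⟨not_mem_of_att hc hcb, c, hc, hcb⟩
  · simp only [labelling_eq_in, labelling_eq_out]
    exact ⟨fun ⟨_, b, hb, hba⟩ => ⟨b, hba, hb⟩,
      fun ⟨b, hba, hb⟩ => ⟨not_mem_of_att hb hba, b, hb, hba⟩⟩

theorem preferredLab_iff_preferred (att : α → α → Prop) (Lab : α → Label)
    (h : completeLab att Lab) :
    ((∀ Lab' : α → Label, completeLab att Lab' →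
        {a | Lab a = Label.IN} ⊆ {a | Lab' a = Label.IN} →
        {a | Lab' a = Label.IN} = {a | Lab a = Label.IN})
      ↔ preferred att {a | Lab a = Label.IN}) := by
  constructor
  · intro hmax
    refine ⟨h.complete_setOf_eq_in, fun U hU hsub => ?_⟩
    rw [← setOf_labelling_eq_in att U] at hsub ⊢
    exact hmax _ hU.completeLab_labelling hsub
  · rintro ⟨-, hmax⟩ Lab' hLab' hsub
    exact hmax _ hLab'.complete_setOf_eq_in hsub
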